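/- Every completely semisimple finite-dimensional left Leibniz algebra is characteristically semisimple: if A is a direct sum of ideals A₁ ⊕ ⋯ ⊕ A_k each of which is characteristically simple, then every solvable characteristic ideal of A is contained in Leib(A). -/
import Mathlib


section Defs
variable {F A : Type*} [Field F] [AddCommGroup A] [Module F A]

def IsLeibniz (b : A →ₗ[F] A →ₗ[F] A) : Prop :=
  ∀ x y z : A, b x (b y z) = b (b x y) z + b y (b x z)

def IsDer (b : A →ₗ[F] A →ₗ[F] A) (δ : A →ₗ[F] A) : Prop :=
  ∀ x y : A, δ (b x y) = b (δ x) y + b x (δ y)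

def IsIdeal (b : A →ₗ[F] A →ₗ[F] A) (I : Submodule F A) : Prop :=
  ∀ x y : A, x ∈ I → b x y ∈ I ∧ b y x ∈ I

/-- An ideal invariant under all derivations: a characteristic ideal. -/
def IsCharIdeal (b : A →ₗ[F] A →ₗ[F] A) (I : Submodule F A) : Prop :=
  IsIdeal b I ∧ ∀ δ : A →ₗ[F] A, IsDer b δ → I.map δ ≤ I

/-- The span of all brackets `[x, y]` with `x ∈ S`, `y ∈ T`. -/
def bracketSpan (b : A →ₗ[F] A →ₗ[F] A) (S T : Submodule F A) : Submodule F A :=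
  Submodule.span F {z | ∃ x ∈ S, ∃ y ∈ T, z = b x y}

/-- The derived series of a submodule. -/
def derSeries (b : A →ₗ[F] A →ₗ[F] A) (I : Submodule F A) : ℕ → Submodule F A
  | 0 => I
  | n + 1 => bracketSpan b (derSeries b I n) (derSeries b I n)

def IsSolvableIdl (b : A →ₗ[F] A →ₗ[F] A) (I : Submodule F A) : Prop :=
  ∃ k : ℕ, derSeries b I k = ⊥

end Defs

def Leib {F A : Type*} [Field F] [AddCommGroup A] [Module F A]
    (b : A →ₗ[F] A →ₗ[F] A) : Submodule F A :=
  Submodule.span F {z | ∃ x : A, z = b x x}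

/-- The componentwise bracket on a finite direct sum (product) of Leibniz algebras. -/
def prodBracket {F : Type*} [Field F] {k : ℕ} {M : Fin k → Type*}
    [∀ i, AddCommGroup (M i)] [∀ i, Module F (M i)]
    (b : ∀ i, M i →ₗ[F] M i →ₗ[F] M i) :
    (∀ i, M i) →ₗ[F] (∀ i, M i) →ₗ[F] (∀ i, M i) :=
  LinearMap.mk₂ F (fun x y i => b i (x i) (y i))
    (by intro x x' y; funext i; simp)
    (by intro c x y; funext i; simp)
    (by intro x y y'; funext i; simp)
    (by intro c x y; funext i; simp)

/-- Every completely semisimple finite-dimensional left Leibniz algebra is characteristically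
semisimple: if `A = A₁ ⊕ ⋯ ⊕ A_k` is a direct sum of ideals each of which is a
characteristically simple Leibniz algebra, then every solvable characteristic ideal of `A`
is contained in `Leib(A)`. -/
theorem completelySemisimple_charSemisimple
    {F : Type*} [Field F] {k : ℕ} {M : Fin k → Type*}
    [∀ i, AddCommGroup (M i)] [∀ i, Module F (M i)] [∀ i, FiniteDimensional F (M i)]
    (b : ∀ i, M i →ₗ[F] M i →ₗ[F] M i) (hb : ∀ i, IsLeibniz (b i))
    (hsimple : ∀ i, ∀ I : Submodule F (M i),
      IsCharIdeal (b i) I → I ≠ ⊤ → I = ⊥ ∨ I = Leib (b i))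
    (hperf : ∀ i, bracketSpan (b i) ⊤ ⊤ = ⊤)
    (B : Submodule F (∀ i, M i))
    (hBchar : IsCharIdeal (prodBracket b) B) (hBsolv : IsSolvableIdl (prodBracket b) B) :
    B ≤ Leib (prodBracket b) := by
  classical
  set π : ∀ i : Fin k, ((∀ j, M j) →ₗ[F] M i) := fun i => LinearMap.proj i with hπdef
  set σ : ∀ i : Fin k, (M i →ₗ[F] (∀ j, M j)) := fun i => LinearMap.single F M i with hσdef
  have hβ : ∀ (x y : ∀ j, M j) (i : Fin k), prodBracket b x y i = b i (x i) (y i) :=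
    fun _ _ _ => rfl
  have hσapp : ∀ (i : Fin k) (x : M i), σ i x i = x := by
    intro i x; simp [hσdef]
  have hσne : ∀ (i j : Fin k) (x : M i), j ≠ i → σ i x j = 0 := by
    intro i j x h; simp [hσdef, Pi.single_eq_of_ne h]
  have hσβ : ∀ (i : Fin k) (x y : M i), σ i (b i x y) = prodBracket b (σ i x) (σ i y) := by
    intro i x y
    funext j
    by_cases h : j = i
    · subst h; rw [hσapp, hβ, hσapp, hσapp]
    · rw [hσne i j _ h, hβ, hσne i j _ h, map_zero, LinearMap.zero_apply]
  -- Leib of each factor embeds into Leib of the product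
  have hLeib : ∀ i : Fin k, (Leib (b i)).map (σ i) ≤ Leib (prodBracket b) := by
    intro i
    rw [Leib, Submodule.map_span]
    apply Submodule.span_le.2
    rintro _ ⟨_, ⟨x, rfl⟩, rfl⟩
    exact Submodule.subset_span ⟨σ i x, hσβ i x x⟩
  -- bracketSpan monotonicity and projection lemma
  have hbs_mono : ∀ {A : Type _} [AddCommGroup A] [Module F A]
      (β : A →ₗ[F] A →ₗ[F] A) (S S' T T' : Submodule F A), S ≤ S' → T ≤ T' →
      bracketSpan β S T ≤ bracketSpan β S' T' := by
    intro A _ _ β S S' T T' hS hT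
    apply Submodule.span_mono
    rintro _ ⟨x, hx, y, hy, rfl⟩
    exact ⟨x, hS hx, y, hT hy, rfl⟩
  have hbs_proj : ∀ (i : Fin k) (S T : Submodule F (∀ j, M j)),
      bracketSpan (b i) (S.map (π i)) (T.map (π i)) ≤
        (bracketSpan (prodBracket b) S T).map (π i) := by
    intro i S T
    apply Submodule.span_le.2
    rintro _ ⟨x, ⟨u, hu, rfl⟩, y, ⟨v, hv, rfl⟩, rfl⟩
    exact ⟨prodBracket b u v, Submodule.subset_span ⟨u, hu, v, hv, rfl⟩, rfl⟩
  -- each projection B_i := π i '' B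
  intro w hw
  have key : ∀ i : Fin k, B.map (π i) ≤ Leib (b i) := by
    intro i
    set Bi : Submodule F (M i) := B.map (π i) with hBi
    -- Bi is an ideal
    have hIdl : IsIdeal (b i) Bi := by
      rintro x y ⟨v, hv, rfl⟩
      constructor
      · refine ⟨prodBracket b v (σ i y), (hBchar.1 v (σ i y) hv).1, ?_⟩
        show prodBracket b v (σ i y) i = b i (v i) y
        rw [hβ, hσapp]
      · refine ⟨prodBracket b (σ i y) v, (hBchar.1 v (σ i y) hv).2, ?_⟩
        show prodBracket b (σ i y) v i = b i y (v i)
        rw [hβ, hσapp]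
    -- Bi is characteristic
    have hChar : IsCharIdeal (b i) Bi := by
      refine ⟨hIdl, ?_⟩
      intro δ hδ
      set Δ : (∀ j, M j) →ₗ[F] (∀ j, M j) := (σ i) ∘ₗ δ ∘ₗ (π i) with hΔdef
      have hΔ : IsDer (prodBracket b) Δ := by
        intro x y
        funext j
        by_cases h : j = i
        · subst h
          show σ j (δ (prodBracket b x y j)) j = _
          rw [hσapp, hβ, hδ (x j) (y j)]
          show _ = prodBracket b (Δ x) y j + prodBracket b x (Δ y) j
          rw [hβ, hβ]
          show _ = b j ((σ j (δ (x j))) j) (y j) + b j (x j) ((σ j (δ (y j))) j)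
          rw [hσapp, hσapp]
        · show σ i (δ (prodBracket b x y i)) j = prodBracket b (Δ x) y j + prodBracket b x (Δ y) j
          rw [hσne i j _ h, hβ, hβ]
          show 0 = b j ((σ i (δ (x i))) j) (y j) + b j (x j) ((σ i (δ (y i))) j)
          rw [hσne i j _ h, hσne i j _ h, map_zero, LinearMap.zero_apply, map_zero, add_zero]
      rintro _ ⟨_, ⟨v, hv, rfl⟩, rfl⟩
      have hΔv : Δ v ∈ B := hBchar.2 Δ hΔ ⟨v, hv, rfl⟩
      refine ⟨Δ v, hΔv, ?_⟩
      show Δ v i = δ (v i)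
      show σ i (δ (v i)) i = δ (v i)
      exact hσapp _ _
    -- Bi is solvable
    have hders : ∀ n, derSeries (b i) Bi n ≤ (derSeries (prodBracket b) B n).map (π i) := by
      intro n
      induction n with
      | zero => exact le_rfl
      | succ n ih =>
          calc derSeries (b i) Bi (n + 1)
              ≤ bracketSpan (b i) ((derSeries (prodBracket b) B n).map (π i))
                  ((derSeries (prodBracket b) B n).map (π i)) := hbs_mono _ _ _ _ _ ih ih
            _ ≤ (derSeries (prodBracket b) B (n + 1)).map (π i) := hbs_proj i _ _
    obtain ⟨n, hn⟩ := hBsolv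
    have hBisolv : derSeries (b i) Bi n = ⊥ := by
      refine le_bot_iff.mp ?_
      calc derSeries (b i) Bi n ≤ (derSeries (prodBracket b) B n).map (π i) := hders n
        _ = (⊥ : Submodule F (∀ j, M j)).map (π i) := by rw [hn]
        _ = ⊥ := Submodule.map_bot _
    -- top is not solvable unless trivial
    have hnotTop : Bi ≠ ⊤ ∨ (⊤ : Submodule F (M i)) = ⊥ := by
      by_cases hT : Bi = ⊤
      · right
        have hdtop : ∀ m, derSeries (b i) (⊤ : Submodule F (M i)) m = ⊤ := by
          intro m
          induction m with
          | zero => rfl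
          | succ m ih => show bracketSpan (b i) _ _ = ⊤; rw [ih]; exact hperf i
        rw [hT] at hBisolv
        rw [← hdtop n, hBisolv]
      · left; exact hT
    rcases hnotTop with hT | htriv
    · rcases hsimple i Bi hChar hT with h | h
      · rw [h]; exact bot_le
      · rw [h]
    · intro x _
      have : x ∈ (⊤ : Submodule F (M i)) := trivial
      rw [htriv] at this
      rw [Submodule.mem_bot] at this
      rw [this]
      exact Submodule.zero_mem _
  -- conclude
  have hsum : w = ∑ i : Fin k, σ i (w i) := by
    have := Finset.univ_sum_single w
    simp only [hσdef]
    exact this.symm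
  rw [hsum]
  apply Submodule.sum_mem
  intro i _
  exact hLeib i ⟨w i, key i ⟨w, hw, rfl⟩, rfl⟩
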